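/- arXiv:1602.01592 — 3 statements merged into one kernel-verified Lean document; each statement's English description precedes it below -/
import Mathlib

section
/- Let k be a commutative ring and let M be an m×ℓ matrix with entries in k. Suppose there exists μ ∈ k with μ ≠ 0 such that μ·δ = 0 for every maximal minor δ of M, i.e. for the determinant of every s×s submatrix of M with s = min(m,ℓ), obtained by a (strictly increasing, equivalently injective) choice of s row indices and s column indices. Then M has a non-zero kernel: there exists a vector v ∈ k^ℓ with v ≠ 0 and M·v = 0. -/
/-!
Pick `n < min m ℓ` such that `μ` kills every `(n + 1)`-minor of `M` but not some `n`-minor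
`δ`, on rows `f` and columns `g`; such an `n` exists because the empty minor is `1` while `μ`
kills all maximal minors (those with unsorted indices agree with sorted ones up to sign). Since
`n < ℓ` there is a column `j` outside `g`. The signed `n`-minors on the rows `f` and the
columns `j, g` form, by Laplace expansion, a vector whose product with the row `i` of `M` is the
`(n + 1)`-minor on the rows `i, f`; after multiplying by `μ` it lies in the kernel, and its
entry at `j` is `μ δ ≠ 0`.
-/

open Matrix Function

theorem Nat.exists_lt_not_and_succ {p : ℕ → Prop} {N : ℕ} (h0 : ¬p 0) (hN : p N) :
    ∃ n < N, ¬p n ∧ p (n + 1) := by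
  induction N with
  | zero => exact absurd hN h0
  | succ N ih =>
    by_cases hpN : p N
    · obtain ⟨n, hn, hn'⟩ := ih hpN
      exact ⟨n, by omega, hn'⟩
    · exact ⟨N, N.lt_succ_self, hpN, hN⟩

namespace Matrix

variable {k ρ ι : Type*} [CommRing k] {n : ℕ}

theorem det_submatrix_eq_zero_of_not_injective_right (M : Matrix ρ ι k) (f : Fin n → ρ)
    {g : Fin n → ι} (hg : ¬Injective g) : (M.submatrix f g).det = 0 := by
  obtain ⟨a, b, hab, hne⟩ := not_injective_iff.1 hg
  exact det_zero_of_column_eq hne fun i => by simp [hab]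

theorem det_submatrix_eq_zero_of_not_injective_left (M : Matrix ρ ι k) {f : Fin n → ρ}
    (g : Fin n → ι) (hf : ¬Injective f) : (M.submatrix f g).det = 0 := by
  rw [← det_transpose, transpose_submatrix,
    det_submatrix_eq_zero_of_not_injective_right Mᵀ g hf]

theorem det_submatrix_comp_perm (M : Matrix ρ ι k) (f : Fin n → ρ) (g : Fin n → ι)
    (σ τ : Equiv.Perm (Fin n)) :
    (M.submatrix (f ∘ σ) (g ∘ τ)).det = σ.sign * τ.sign * (M.submatrix f g).det := by
  have : M.submatrix (f ∘ σ) (g ∘ τ) = ((M.submatrix f g).submatrix id τ).submatrix σ id := rfl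
  rw [this, det_permute, det_permute', mul_assoc]

theorem mul_det_submatrix_eq_zero_of_forall_strictMono [LinearOrder ρ] [LinearOrder ι]
    (M : Matrix ρ ι k) (μ : k)
    (H : ∀ (f : Fin n → ρ) (g : Fin n → ι), StrictMono f → StrictMono g →
      μ * (M.submatrix f g).det = 0)
    (f : Fin n → ρ) (g : Fin n → ι) : μ * (M.submatrix f g).det = 0 := by
  by_cases hf : Injective f
  · by_cases hg : Injective g
    · have hfs :=
        (Tuple.monotone_sort f).strictMono_of_injective (hf.comp (Tuple.sort f).injective)
      have hgs :=
        (Tuple.monotone_sort g).strictMono_of_injective (hg.comp (Tuple.sort g).injective)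
      have key := det_submatrix_comp_perm M (f ∘ Tuple.sort f) (g ∘ Tuple.sort g)
        (Tuple.sort f).symm (Tuple.sort g).symm
      simp only [comp_assoc, Equiv.self_comp_symm, comp_id] at key
      rw [key, mul_left_comm, H _ _ hfs hgs, mul_zero]
    · rw [det_submatrix_eq_zero_of_not_injective_right M f hg, mul_zero]
  · rw [det_submatrix_eq_zero_of_not_injective_left M g hf, mul_zero]

variable [DecidableEq ι]

def cofactorVec (M : Matrix ρ ι k) (f : Fin n → ρ) (g : Fin (n + 1) → ι) : ι → k :=
  ∑ u, Pi.single (g u) ((-1) ^ (u : ℕ) * (M.submatrix f (g ∘ u.succAbove)).det)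

theorem mulVec_cofactorVec [Fintype ι] (M : Matrix ρ ι k) (f : Fin n → ρ) (g : Fin (n + 1) → ι)
    (i : ρ) :
    (M *ᵥ cofactorVec M f g) i = (M.submatrix (Fin.cons i f) g).det := by
  simp [cofactorVec, mulVec_sum, det_succ_row_zero, mul_comm, mul_assoc]

theorem cofactorVec_apply_zero (M : Matrix ρ ι k) (f : Fin n → ρ) {g : Fin (n + 1) → ι}
    (hg : Injective g) : cofactorVec M f g (g 0) = (M.submatrix f (g ∘ Fin.succ)).det := by
  simp [cofactorVec, Finset.sum_apply, Pi.single_apply, hg.eq_iff]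

theorem exists_mulVec_eq_zero_of_mul_det_submatrix_ne_zero [Fintype ι] (M : Matrix ρ ι k)
    (μ : k) (f : Fin n → ρ) {g : Fin (n + 1) → ι} (hg : Injective g)
    (hne : μ * (M.submatrix f (g ∘ Fin.succ)).det ≠ 0)
    (hzero : ∀ i, μ * (M.submatrix (Fin.cons i f) g).det = 0) :
    ∃ v : ι → k, v ≠ 0 ∧ M *ᵥ v = 0 := by
  refine ⟨μ • cofactorVec M f g, fun hv => hne ?_, ?_⟩
  · simpa [cofactorVec_apply_zero M f hg] using congrFun hv (g 0)
  · ext i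
    simp [mulVec_smul, mulVec_cofactorVec, hzero]

end Matrix

/-- Lemma `zerodivdet`: if a nonzero scalar `μ` annihilates every maximal minor
(the determinant of every `s × s` submatrix with `s = min m ℓ`, given by strictly
increasing choices of row and column indices) of an `m × ℓ` matrix `M` over a
commutative ring, then `M` has a non-zero kernel. -/
theorem matrix_nonzero_kernel_of_mu_annihilates_maximal_minors
    {k : Type*} [CommRing k] {m ℓ : ℕ} (M : Matrix (Fin m) (Fin ℓ) k)
    (h : ∃ μ : k, μ ≠ 0 ∧
      ∀ (f : Fin (min m ℓ) → Fin m) (g : Fin (min m ℓ) → Fin ℓ),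
        StrictMono f → StrictMono g → μ * (M.submatrix f g).det = 0) :
    ∃ v : Fin ℓ → k, v ≠ 0 ∧ M.mulVec v = 0 := by
  obtain ⟨μ, hμ, hmax⟩ := h
  obtain ⟨n, hn, hne, hzero⟩ := Nat.exists_lt_not_and_succ
    (p := fun n => ∀ (f : Fin n → Fin m) (g : Fin n → Fin ℓ), μ * (M.submatrix f g).det = 0)
    (fun h0 => hμ (by simpa using h0 finZeroElim finZeroElim))
    (mul_det_submatrix_eq_zero_of_forall_strictMono M μ hmax)
  push Not at hne
  obtain ⟨f, g, hfg⟩ := hne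
  have hg : Injective g := by
    by_contra hg
    exact hfg (by rw [det_submatrix_eq_zero_of_not_injective_right M f hg, mul_zero])
  obtain ⟨j, hj⟩ : ∃ j, j ∉ Set.range g := by
    by_contra! hsurj
    have := Fintype.card_le_of_surjective g hsurj
    simp only [Fintype.card_fin] at this
    omega
  exact exists_mulVec_eq_zero_of_mul_det_submatrix_ne_zero M μ f
    (Fin.cons_injective_iff.2 ⟨hj, hg⟩) (by rwa [Fin.cons_comp_succ]) fun i => hzero _ _
end

section
/- Let k be a commutative ring and let M be an n×n matrix with entries in k. If the map k^n → k^n, v ↦ M·v, is injective, then det M is a non-zero-divisor in k: for every μ ∈ k, μ·det M = 0 implies μ = 0. -/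
/-- If an `n × n` matrix `M` over a commutative ring acts injectively on column
vectors, then its determinant is a non-zero-divisor: `μ * det M = 0` implies `μ = 0`. -/
theorem det_nonZeroDivisor_of_injective_mulVec
    {k : Type*} [CommRing k] {n : ℕ} (M : Matrix (Fin n) (Fin n) k)
    (h : Function.Injective M.mulVec) :
    ∀ μ : k, μ * M.det = 0 → μ = 0 :=
  mem_nonZeroDivisors_iff_right.mp <| Matrix.nonsingular_iff_det_mem_nonZeroDivisors.mp <|
    .of_linearIndependent_col (Matrix.mulVec_injective_iff.mp h)
end

section
/- Let k be a commutative ring, A a unital associative k-algebra which is free of finite rank as a k-module, and t : A → k a trace, i.e. a k-linear map satisfying t(ab) = t(ba) for all a, b ∈ A. Then the following are equivalent: (i) t is non-degenerate, i.e. the k-linear map ρ : A → Hom_k(A, k) defined by ρ(a)(x) = t(ax) is bijective; (ii) for every μ ∈ k and every a ∈ A, one has (t(ax) ∈ μ·k for all x ∈ A) if and only if a ∈ μ·A, i.e. a = μ·b for some b ∈ A. -/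
/-!
In bases of `A` and of its dual, `a ↦ t(a·-)` is a square matrix `N` over `k`, and the second
condition says that `N` reflects divisibility by every scalar `μ` (the converse inclusion being
automatic). Taking `μ = 0` gives injectivity. By McCoy's theorem `det N` is then a
non-zero-divisor, and taking `μ = det N` in `N (adj N w) = det N • w` gives
`adj N w = det N • u`, whence `N u = w` after cancelling `det N`.
-/

open Function

namespace LinearMap

variable {R M N P : Type*} [Ring R] [AddCommGroup M] [AddCommGroup N] [AddCommGroup P]
  [Module R M] [Module R N] [Module R P]

def ReflectsDivisibility (f : M →ₗ[R] N) : Prop :=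
  ∀ (μ : R) (x : M), (∃ y, f x = μ • y) → ∃ x', x = μ • x'

theorem reflectsDivisibility_iff (f : M →ₗ[R] N) :
    f.ReflectsDivisibility ↔ ∀ (μ : R) (x : M), (∃ y, f x = μ • y) ↔ ∃ x', x = μ • x' := by
  refine ⟨fun hf μ x => ⟨hf μ x, ?_⟩, fun hf μ x => (hf μ x).mp⟩
  rintro ⟨x', rfl⟩
  exact ⟨f x', map_smul f μ x'⟩

namespace ReflectsDivisibility

variable {f : M →ₗ[R] N}

theorem injective (hf : f.ReflectsDivisibility) : Injective f := by
  refine (injective_iff_map_eq_zero f).mpr fun x hx => ?_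
  obtain ⟨x', rfl⟩ := hf 0 x ⟨0, by rw [hx, zero_smul]⟩
  exact zero_smul R x'

theorem comp {g : N →ₗ[R] P} (hg : g.ReflectsDivisibility) (hf : f.ReflectsDivisibility) :
    (g ∘ₗ f).ReflectsDivisibility :=
  fun μ x hx => hf μ x (hg μ (f x) hx)

end ReflectsDivisibility

theorem reflectsDivisibility_of_bijective {f : M →ₗ[R] N} (hf : Bijective f) :
    f.ReflectsDivisibility := by
  rintro μ x ⟨y, hy⟩
  obtain ⟨x', rfl⟩ := hf.2 y
  exact ⟨x', hf.1 (by rw [hy, map_smul])⟩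

end LinearMap

namespace Matrix

variable {ι k : Type*} [Fintype ι] [DecidableEq ι] [CommRing k]

theorem det_dvd_det_submatrix (N : Matrix ι ι k) (f g : Fin (Fintype.card ι) → ι) :
    N.det ∣ (N.submatrix f g).det := by
  let e := Fintype.equivFin ι
  let M := N.submatrix e.symm e.symm
  have hM : N.submatrix f g =
      (1 : Matrix _ _ k).submatrix (e ∘ f) (Equiv.refl _) * M *
        (1 : Matrix _ _ k).submatrix (Equiv.refl _) (e ∘ g) := by
    rw [one_submatrix_mul _ (Equiv.refl _), mul_submatrix_one (Equiv.refl _)]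
    ext; simp [M]
  rw [hM, det_mul, det_mul, det_submatrix_equiv_self]
  exact (dvd_mul_left _ _).mul_right _

/-- Descent step of McCoy's theorem: for a column `j₀ ∉ range g`, expanding the minors on rows
`i, f` and columns `j₀, g` along their first row shows that `N` kills `v`, whose `j₀`-entry is
`c` times the given minor. -/
theorem mul_det_submatrix_eq_zero_of_succ (N : Matrix ι ι k) (hN : Injective N.mulVec)
    {c : k} {r : ℕ} (hr : r < Fintype.card ι)
    (h : ∀ f g : Fin (r + 1) → ι, c * (N.submatrix f g).det = 0) (f g : Fin r → ι) :
    c * (N.submatrix f g).det = 0 := by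
  obtain ⟨j₀, hj₀⟩ : ∃ j₀, j₀ ∉ Set.range g := by
    by_contra! hg
    exact hr.not_ge (Fintype.card_fin r ▸ Fintype.card_le_of_surjective g hg)
  let γ : Fin (r + 1) → ι := Fin.cons j₀ g
  let cof : Fin (r + 1) → k := fun s => (-1) ^ (s : ℕ) * (N.submatrix f (γ ∘ s.succAbove)).det
  let v : ι → k := ∑ s, Pi.single (γ s) (c * cof s)
  have hv : N *ᵥ v = 0 := by
    ext i
    calc (N *ᵥ v) i = ∑ s, N i (γ s) * (c * cof s) := by simp [v, mulVec_sum]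
      _ = c * ∑ s : Fin (r + 1),
            (-1) ^ (s : ℕ) * N i (γ s) * (N.submatrix f (γ ∘ s.succAbove)).det := by
        rw [Finset.mul_sum]
        exact Finset.sum_congr rfl fun s _ => by simp only [cof]; ring
      _ = c * (N.submatrix (Fin.cons i f) γ).det := by simp [det_succ_row_zero]
      _ = 0 := h _ _
  have hvj₀ : v j₀ = c * (N.submatrix f g).det := by
    have hg : ∀ p, g p ≠ j₀ := fun p hp => hj₀ ⟨p, hp⟩
    simp [v, cof, γ, Finset.sum_apply, Fin.sum_univ_succ, hg]
  rw [← hvj₀, hN (hv.trans (mulVec_zero N).symm)]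
  rfl

theorem det_mem_nonZeroDivisors_of_mulVec_injective (N : Matrix ι ι k)
    (hN : Injective N.mulVec) : N.det ∈ nonZeroDivisors k := by
  refine mem_nonZeroDivisors_iff_right.mpr fun c hc => ?_
  have hminors : ∀ r ≤ Fintype.card ι, ∀ f g : Fin r → ι, c * (N.submatrix f g).det = 0 := by
    intro r hr
    induction hr using Nat.decreasingInduction with
    | self =>
      intro f g
      obtain ⟨d, hd⟩ := N.det_dvd_det_submatrix f g
      rw [hd, ← mul_assoc, hc, zero_mul]
    | of_succ r hr ih => exact mul_det_submatrix_eq_zero_of_succ N hN hr ih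
  simpa using hminors 0 (Nat.zero_le _) finZeroElim finZeroElim

theorem mulVec_bijective_of_reflectsDivisibility (N : Matrix ι ι k)
    (hN : N.mulVecLin.ReflectsDivisibility) :
    Bijective N.mulVec := by
  have hinj : Injective N.mulVec := hN.injective
  refine ⟨hinj, fun w => ?_⟩
  have hadj : N *ᵥ (N.adjugate *ᵥ w) = N.det • w := by
    rw [mulVec_mulVec, mul_adjugate, smul_mulVec, one_mulVec]
  obtain ⟨u, hu⟩ := hN N.det (N.adjugate *ᵥ w) ⟨w, hadj⟩
  have hdet : IsSMulRegular (ι → k) N.det := IsSMulRegular.pi fun _ =>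
    isSMulRegular_iff_mem_nonZeroSMulDivisors.mpr
      (N.det_mem_nonZeroDivisors_of_mulVec_injective hinj).1
  refine ⟨u, hdet ?_⟩
  change N.det • (N *ᵥ u) = N.det • w
  rw [← mulVec_smul, ← hu, hadj]

end Matrix

namespace LinearMap

variable {R M N ι : Type*} [CommRing R] [AddCommGroup M] [AddCommGroup N] [Module R M]
  [Module R N] [Fintype ι] [DecidableEq ι]

theorem ReflectsDivisibility.bijective {f : M →ₗ[R] N} (b : Module.Basis ι R M)
    (b' : Module.Basis ι R N) (hf : f.ReflectsDivisibility) : Bijective f := by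
  let F := b'.equivFun.toLinearMap ∘ₗ f ∘ₗ b.equivFun.symm.toLinearMap
  have hF : F.ReflectsDivisibility :=
    (reflectsDivisibility_of_bijective b'.equivFun.bijective).comp
      (hf.comp (reflectsDivisibility_of_bijective b.equivFun.symm.bijective))
  have hFbij : Bijective F := by
    rw [← Matrix.toLin'_toMatrix' F, Matrix.toLin'_apply'] at hF ⊢
    exact (toMatrix' F).mulVec_bijective_of_reflectsDivisibility hF
  convert (b'.equivFun.symm.bijective.comp hFbij).comp b.equivFun.bijective
  ext x
  simp [F]

theorem bijective_iff_reflectsDivisibility (f : M →ₗ[R] N) (b : Module.Basis ι R M)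
    (b' : Module.Basis ι R N) : Bijective f ↔ f.ReflectsDivisibility :=
  ⟨reflectsDivisibility_of_bijective, ReflectsDivisibility.bijective b b'⟩

end LinearMap

theorem Module.Dual.exists_eq_smul_iff {R M : Type*} [CommRing R] [AddCommGroup M] [Module R M]
    [Module.Free R M] (φ : Module.Dual R M) (μ : R) :
    (∃ ψ, φ = μ • ψ) ↔ ∀ x, μ ∣ φ x := by
  refine ⟨fun ⟨ψ, hψ⟩ x => ⟨ψ x, by rw [hψ, LinearMap.smul_apply, smul_eq_mul]⟩, fun h => ?_⟩
  let b := Module.Free.chooseBasis R M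
  choose c hc using fun i => h (b i)
  exact ⟨b.constr R c, b.ext fun i => by simp [hc]⟩

theorem trace_nondegenerate_iff_principal_ideal_characterization_general
    {k A : Type*} [CommRing k] [Ring A] [Algebra k A]
    [Module.Free k A] [Module.Finite k A]
    (t : A →ₗ[k] k) :
    Function.Bijective (fun a : A => t.comp (LinearMap.mulLeft k a)) ↔
      ∀ (μ : k) (a : A),
        (∀ x : A, ∃ c : k, t (a * x) = μ * c) ↔ (∃ b : A, a = μ • b) := by
  classical
  let b := Module.Free.chooseBasis k A
  let ρ : A →ₗ[k] Module.Dual k A := (LinearMap.mul k A).compr₂ t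
  change Function.Bijective ρ ↔ _
  rw [ρ.bijective_iff_reflectsDivisibility b b.dualBasis, ρ.reflectsDivisibility_iff]
  refine forall₂_congr fun μ a => ?_
  rw [Module.Dual.exists_eq_smul_iff]
  rfl

/-- Lemma `caracnondeg`: for a trace `t` on a `k`-algebra `A` which is free of
finite rank as a `k`-module, the map `ρ : a ↦ t(a·−)` is bijective (i.e. `t` is
non-degenerate) iff for all `μ ∈ k` and `a ∈ A`, one has
`(∀ x, t(ax) ∈ μk) ↔ a ∈ μA`. -/
theorem trace_nondegenerate_iff_principal_ideal_characterization
    {k A : Type*} [CommRing k] [Ring A] [Algebra k A]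
    [Module.Free k A] [Module.Finite k A]
    (t : A →ₗ[k] k) (ht : ∀ a b : A, t (a * b) = t (b * a)) :
    Function.Bijective (fun a : A => t.comp (LinearMap.mulLeft k a)) ↔
      ∀ (μ : k) (a : A),
        (∀ x : A, ∃ c : k, t (a * x) = μ * c) ↔ (∃ b : A, a = μ • b) :=
  trace_nondegenerate_iff_principal_ideal_characterization_general t
end
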